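/- Assume e ≥ 2. Let U' be the 2×2 rational matrix [[b₁/m₁, b₁·r₁·λ_{1,1}], [b₂·r₂·λ_{2,1}, b₂/m₂]] and let M' = sw(U'). Then M'₁₂ = n₁·r₁, M'₂₁ = −n₂·r₂, M'₂₂ = m₁·m₂/d_•, all four entries of M' are integers, det M' = 1, and for every j = 1, …, e−1: λ'_{1,j}(1) = M'₁₁·λ'_{1,j}(2) + M'₁₂·λ'_{2,j}(2) and λ'_{2,j}(1) = M'₂₁·λ'_{1,j}(2) + M'₂₂·λ'_{2,j}(2). -/

import Mathlib

/-!
Writing `λ_{u,1} = n_u / m_u`, `b₁ = d_• / m₂` and `b₂ = d_• / m₁`, the matrix `U'` is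
`g⁻¹ [[1, n₁r₁], [n₂r₂, 1]]` with `g = gcd(m₁, m₂) = m₁m₂ / d_•`. Hence
`M' = sw U' = [[g⁻¹(1 − n₁r₁n₂r₂), n₁r₁], [−n₂r₂, g]]` and `det M' = U'₁₁ / U'₂₂ = 1`; the Bézout
relations `m₂s₁ − n₂r₁ = 1 = m₁s₂ − n₁r₂` make `g` divide `1 − n₁r₁n₂r₂`.

Since lowest terms are unique, the level-`0` data do not depend on `i`, and the two recursions
say `y = U' x` for `x = (λ'_{1,j}(2), λ'_{2,j}(1))`, `y = (λ'_{1,j}(1), λ'_{2,j}(2))`. The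
matrix `sw U'` is the pivot of this system that exchanges the second coordinates of `x` and `y`,
which is the claimed relation.
-/

/-- The data of a reduced irreducible quasi-ordinary prototype surface branch
`ζ = Σ_{j=1}^e x₁^{λ_{1,j}} x₂^{λ_{2,j}}` together with, for each choice `i ∈ {1,2}`
of the recursion, the derived exponent sequences `λ^{(k)}_{u,j}(i)`, the lowest-terms
representations `λ^{(k)}_{u,1}(i) = n_u^{(k)}(i) / m_u^{(k)}(i)` of the leading
exponents, and the minimal nonnegative integers `r_i^{(k)}, s_i^{(k)}` with
`m_ĩ^{(k)}(i)·s_i^{(k)} − n_ĩ^{(k)}(i)·r_i^{(k)} = 1`.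

The `Bool` index `false` corresponds to the index `1` of the paper and `true` to `2`;
for an index `i`, the other index `ĩ` is `!i`. -/
structure QOData where
  /-- the number `e ≥ 1` of characteristic terms -/
  e : ℕ
  he : 1 ≤ e
  /-- the characteristic exponents `λ_{u,j}` for `u ∈ {1,2}`, `j = 1,…,e` -/
  lam0 : Bool → ℕ → ℚ
  /-- the derived exponents `λ^{(k)}_{u,j}(i)`; the arguments are, in order, `i u k j`,
  with `k = 0,…,e−1` and `j = 1,…,e−k` -/
  lam : Bool → Bool → ℕ → ℕ → ℚ
  /-- the numerators `n_u^{(k)}(i)`; the arguments are, in order, `i u k` -/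
  n : Bool → Bool → ℕ → ℤ
  /-- the denominators `m_u^{(k)}(i) ≥ 1`; the arguments are, in order, `i u k` -/
  m : Bool → Bool → ℕ → ℕ
  /-- `r_i^{(k)}`; the arguments are, in order, `i k` -/
  r : Bool → ℕ → ℕ
  /-- `s_i^{(k)}`; the arguments are, in order, `i k` -/
  s : Bool → ℕ → ℕ
  /-- the leading exponents are positive -/
  pos : ∀ u, 0 < lam0 u 1
  /-- the exponents are nondecreasing in `j` -/
  mono : ∀ u j, 1 ≤ j → j < e → lam0 u j ≤ lam0 u (j + 1)
  /-- each characteristic pair is essential: it does not lie in the subgroup of `ℚ²`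
  generated by `ℤ²` together with the earlier pairs -/
  essential : ∀ j, 1 ≤ j → j ≤ e →
    (lam0 false j, lam0 true j) ∉
      AddSubgroup.closure
        ((Set.range fun p : ℤ × ℤ => ((p.1 : ℚ), (p.2 : ℚ))) ∪
          {q : ℚ × ℚ | ∃ l, 1 ≤ l ∧ l < j ∧ q = (lam0 false l, lam0 true l)})
  /-- `λ^{(0)}_{u,j}(i) = λ_{u,j}` -/
  base : ∀ i u j, lam i u 0 j = lam0 u j
  /-- the denominators are at least 1 -/
  m_pos : ∀ i u k, k ≤ e - 1 → 1 ≤ m i u k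
  /-- the leading exponents are written in lowest terms -/
  cop : ∀ i u k, k ≤ e - 1 → Int.gcd (n i u k) (m i u k : ℤ) = 1
  /-- `λ^{(k)}_{u,1}(i) = n_u^{(k)}(i) / m_u^{(k)}(i)` -/
  lead : ∀ i u k, k ≤ e - 1 → lam i u k 1 = (n i u k : ℚ) / (m i u k : ℚ)
  /-- `m_ĩ^{(k)}(i)·s_i^{(k)} − n_ĩ^{(k)}(i)·r_i^{(k)} = 1` -/
  rs_det : ∀ i k, k ≤ e - 1 →
    (m i (!i) k : ℤ) * (s i k : ℤ) - n i (!i) k * (r i k : ℤ) = 1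
  /-- `r_i^{(k)}` and `s_i^{(k)}` are the smallest nonnegative integers satisfying
  the determinant condition -/
  rs_min : ∀ i k, k ≤ e - 1 → ∀ r' s' : ℕ,
    (m i (!i) k : ℤ) * (s' : ℤ) - n i (!i) k * (r' : ℤ) = 1 → r i k ≤ r' ∧ s i k ≤ s'
  /-- the recursion for `λ^{(k+1)}_{ĩ,j}(i)`, where `d_•^{(k)}(i) = lcm(m₁^{(k)}(i), m₂^{(k)}(i))` -/
  rec_other : ∀ i k j, k + 1 ≤ e - 1 → 1 ≤ j → j ≤ e - (k + 1) →
    lam i (!i) (k + 1) j =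
      (m i (!i) k : ℚ) *
        (lam i (!i) k (j + 1) - lam i (!i) k 1 +
          (Nat.lcm (m i false k) (m i true k) : ℚ) * lam i (!i) k 1)
  /-- the recursion for `λ^{(k+1)}_{i,j}(i)`, where
  `b_i^{(k)} = d_•^{(k)}(i) / m_ĩ^{(k)}(i)` -/
  rec_self : ∀ i k j, k + 1 ≤ e - 1 → 1 ≤ j → j ≤ e - (k + 1) →
    lam i i (k + 1) j =
      ((Nat.lcm (m i false k) (m i true k) / m i (!i) k : ℕ) : ℚ) *
        (lam i i k (j + 1) - lam i i k 1 +
          (Nat.lcm (m i false k) (m i true k) : ℚ) * lam i i k 1) +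
      ((Nat.lcm (m i false k) (m i true k) / m i (!i) k : ℕ) : ℚ) * (r i k : ℚ) *
        lam i i k 1 * lam i (!i) (k + 1) j

namespace QOData

variable (D : QOData)

/-- `d_•^{(k)}(i) = lcm(m₁^{(k)}(i), m₂^{(k)}(i))` -/
def dd (i : Bool) (k : ℕ) : ℕ := Nat.lcm (D.m i false k) (D.m i true k)

/-- `b_i^{(k)} = d_•^{(k)}(i) / m_ĩ^{(k)}(i)` -/
def b (i : Bool) (k : ℕ) : ℕ := D.dd i k / D.m i (!i) k

/-- `c_•^{(k)}(i) = gcd(n₁^{(k)}(i), n₂^{(k)}(i))` -/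
def c (i : Bool) (k : ℕ) : ℕ := Int.gcd (D.n i false k) (D.n i true k)

/-- `d^{(k)}(i) = ∏_{l=k}^{e−1} d_•^{(l)}(i)`, the degree of the `k`-th derived surface -/
def dTot (i : Bool) (k : ℕ) : ℕ := ∏ l ∈ Finset.Ico k D.e, D.dd i l

end QOData

/-- For a 2×2 matrix `U` over `ℚ` with `U 1 1 ≠ 0` and determinant `Δ`,
`sw U = [[Δ/U₂₂, U₁₂/U₂₂], [−U₂₁/U₂₂, 1/U₂₂]]`. -/
def sw (U : Matrix (Fin 2) (Fin 2) ℚ) : Matrix (Fin 2) (Fin 2) ℚ :=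
  !![U.det / U 1 1, U 0 1 / U 1 1; -(U 1 0) / U 1 1, 1 / U 1 1]

theorem sw_det {U : Matrix (Fin 2) (Fin 2) ℚ} (h : U 1 1 ≠ 0) :
    (sw U).det = U 0 0 / U 1 1 := by
  rw [sw, Matrix.det_fin_two_of, Matrix.det_fin_two]
  field_simp
  ring

/-- `sw U` is the principal pivot transform of `U`: it exchanges the roles of `x₁` and `y₁`
in the system `y = U x`. -/
theorem sw_pivot {U : Matrix (Fin 2) (Fin 2) ℚ} (h : U 1 1 ≠ 0) {x₀ x₁ y₀ y₁ : ℚ}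
    (hy₀ : y₀ = U 0 0 * x₀ + U 0 1 * x₁) (hy₁ : y₁ = U 1 0 * x₀ + U 1 1 * x₁) :
    y₀ = sw U 0 0 * x₀ + sw U 0 1 * y₁ ∧ x₁ = sw U 1 0 * x₀ + sw U 1 1 * y₁ := by
  simp only [sw, Matrix.det_fin_two, Matrix.of_apply, Matrix.cons_val', Matrix.cons_val_zero,
    Matrix.cons_val_one, Matrix.empty_val', Matrix.cons_val_fin_one]
  subst hy₀ hy₁
  constructor <;> field_simp <;> ring

theorem sw_smul_of {t : ℚ} (ht : t ≠ 0) (a c : ℚ) :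
    sw (t • !![1, a; c, 1]) = !![t * (1 - a * c), a; -c, t⁻¹] := by
  ext i j
  fin_cases i <;> fin_cases j <;> simp [sw, Matrix.det_fin_two] <;> field_simp

theorem Int.gcd_dvd_one_sub_mul_of_bezout {m₁ m₂ n₁ n₂ r₁ r₂ s₁ s₂ : ℤ}
    (h₁ : m₂ * s₁ - n₂ * r₁ = 1) (h₂ : m₁ * s₂ - n₁ * r₂ = 1) :
    (m₁.gcd m₂ : ℤ) ∣ 1 - n₁ * r₁ * (n₂ * r₂) := by
  have key : 1 - n₁ * r₁ * (n₂ * r₂) = m₁ * (s₂ - m₂ * s₁ * s₂) + m₂ * s₁ := by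
    linear_combination (m₁ * s₂ - 1) * h₁ + n₂ * r₁ * h₂
  rw [key]
  exact dvd_add ((Int.gcd_dvd_left _ _).mul_right _) ((Int.gcd_dvd_right _ _).mul_right _)

namespace QOData

variable (D : QOData)

theorem m_ne_zero (i u : Bool) {k : ℕ} (hk : k ≤ D.e - 1) : (D.m i u k : ℚ) ≠ 0 := by
  have := D.m_pos i u k hk
  positivity

theorem n_zero (i u : Bool) : D.n i u 0 = (D.lam0 u 1).num := by
  have hm : (0 : ℤ) < D.m i u 0 := by exact_mod_cast D.m_pos i u 0 (Nat.zero_le _)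
  rw [← D.base i u 1, D.lead i u 0 (Nat.zero_le _)]
  exact_mod_cast (Rat.num_div_eq_of_coprime hm (D.cop i u 0 (Nat.zero_le _))).symm

theorem m_zero (i u : Bool) : D.m i u 0 = (D.lam0 u 1).den := by
  have hm : (0 : ℤ) < D.m i u 0 := by exact_mod_cast D.m_pos i u 0 (Nat.zero_le _)
  rw [← D.base i u 1, D.lead i u 0 (Nat.zero_le _)]
  exact_mod_cast (Rat.den_div_eq_of_coprime hm (D.cop i u 0 (Nat.zero_le _))).symm

theorem n_zero_eq (i i' u : Bool) : D.n i u 0 = D.n i' u 0 := by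
  rw [n_zero, n_zero]

theorem m_zero_eq (i i' u : Bool) : D.m i u 0 = D.m i' u 0 := by
  rw [m_zero, m_zero]

theorem b_mul_m_not (i : Bool) (k : ℕ) : D.b i k * D.m i (!i) k = D.dd i k :=
  Nat.div_mul_cancel (by cases i <;> simp [dd, Nat.dvd_lcm_left, Nat.dvd_lcm_right])

theorem b_div_m_self (i : Bool) {k : ℕ} (hk : k ≤ D.e - 1) :
    (D.b i k : ℚ) / D.m i i k = ((D.m i false k).gcd (D.m i true k) : ℚ)⁻¹ := by
  have hb : (D.b i k : ℚ) * D.m i (!i) k = D.dd i k := by exact_mod_cast D.b_mul_m_not i k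
  have hgl : ((D.m i false k).gcd (D.m i true k) : ℚ) * D.dd i k
      = D.m i false k * D.m i true k := by exact_mod_cast Nat.gcd_mul_lcm _ _
  have hg : ((D.m i false k).gcd (D.m i true k) : ℚ) ≠ 0 := by
    have := D.m_pos i false k hk
    exact_mod_cast (Nat.gcd_pos_of_pos_left _ this).ne'
  rw [div_eq_iff (D.m_ne_zero i i hk)]
  apply mul_right_cancel₀ (D.m_ne_zero i (!i) hk)
  rw [hb]
  field_simp
  cases i <;> simp only [Bool.not_false, Bool.not_true] <;> linear_combination hgl

theorem lam0_one (u : Bool) : D.lam0 u 1 = D.n u u 0 / D.m u u 0 := by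
  rw [← D.base u u 1, D.lead u u 0 (Nat.zero_le _)]

/-- The bracket in `rec_self` for `i` reappears in `rec_other` for `!i`, because the level-`0`
data do not depend on `i`. -/
theorem lam_self_one (i : Bool) {j : ℕ} (hj : 1 ≤ j) (hje : j ≤ D.e - 1) :
    D.lam i i 1 j = D.b i 0 / D.m i i 0 * D.lam (!i) i 1 j
      + D.b i 0 * D.r i 0 * D.lam0 i 1 * D.lam i (!i) 1 j := by
  have he : 0 + 1 ≤ D.e - 1 := by omega
  have hself := D.rec_self i 0 j he hj hje
  have hother := D.rec_other (!i) 0 j he hj hje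
  simp only [Bool.not_not, D.base, D.m_zero_eq (!i) i] at hself hother
  have := D.m_ne_zero i i (Nat.zero_le _)
  rw [hself, hother, b, dd]
  field_simp

def Uprime : Matrix (Fin 2) (Fin 2) ℚ :=
  !![(D.b false 0 : ℚ) / (D.m false false 0 : ℚ),
      (D.b false 0 : ℚ) * (D.r false 0 : ℚ) * D.lam0 false 1;
    (D.b true 0 : ℚ) * (D.r true 0 : ℚ) * D.lam0 true 1,
      (D.b true 0 : ℚ) / (D.m true true 0 : ℚ)]

theorem lam_one_eq_Uprime_mul {j : ℕ} (hj : 1 ≤ j) (hje : j ≤ D.e - 1) :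
    D.lam false false 1 j
        = D.Uprime 0 0 * D.lam true false 1 j + D.Uprime 0 1 * D.lam false true 1 j ∧
      D.lam true true 1 j
        = D.Uprime 1 0 * D.lam true false 1 j + D.Uprime 1 1 * D.lam false true 1 j := by
  refine ⟨D.lam_self_one false hj hje, ?_⟩
  rw [D.lam_self_one true hj hje]
  simp only [Uprime, Matrix.of_apply, Matrix.cons_val', Matrix.cons_val_zero, Matrix.cons_val_one,
    Matrix.empty_val', Matrix.cons_val_fin_one, Bool.not_true]
  ring

def gcdDen : ℕ := (D.m false false 0).gcd (D.m true true 0)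

theorem gcdDen_ne_zero : (D.gcdDen : ℚ) ≠ 0 := by
  have := D.m_pos false false 0 (Nat.zero_le _)
  exact_mod_cast (Nat.gcd_pos_of_pos_left _ this).ne'

theorem gcdDen_eq_div_dd :
    (D.gcdDen : ℚ) = D.m false false 0 * D.m true true 0 / D.dd false 0 := by
  have hdd : D.dd false 0 = (D.m false false 0).lcm (D.m true true 0) := by
    rw [dd, D.m_zero_eq false true true]
  have hd : (D.dd false 0 : ℚ) ≠ 0 := by
    rw [hdd]
    exact_mod_cast Nat.lcm_ne_zero (by have := D.m_pos false false 0 (Nat.zero_le _); omega)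
      (by have := D.m_pos true true 0 (Nat.zero_le _); omega)
  rw [eq_div_iff hd, gcdDen, hdd]
  exact_mod_cast Nat.gcd_mul_lcm _ _

theorem b_div_m_zero (i : Bool) : (D.b i 0 : ℚ) / D.m i i 0 = (D.gcdDen : ℚ)⁻¹ := by
  rw [D.b_div_m_self i (Nat.zero_le _), gcdDen, D.m_zero_eq i false false,
    D.m_zero_eq i true true]

theorem Uprime_eq_smul : D.Uprime = (D.gcdDen : ℚ)⁻¹ •
    !![1, (D.n false false 0 * D.r false 0 : ℚ); (D.n true true 0 * D.r true 0 : ℚ), 1] := by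
  have hmul (i : Bool) : (D.b i 0 : ℚ) * D.r i 0 * D.lam0 i 1
      = (D.gcdDen : ℚ)⁻¹ * (D.n i i 0 * D.r i 0) := by
    rw [← D.b_div_m_zero i, D.lam0_one]
    ring
  rw [Uprime, hmul, hmul, D.b_div_m_zero, D.b_div_m_zero]
  ext a b
  fin_cases a <;> fin_cases b <;> simp

theorem sw_Uprime : sw D.Uprime =
    !![(D.gcdDen : ℚ)⁻¹ * (1 - D.n false false 0 * D.r false 0 * (D.n true true 0 * D.r true 0)),
        D.n false false 0 * D.r false 0;
      -(D.n true true 0 * D.r true 0), D.gcdDen] := by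
  rw [D.Uprime_eq_smul, sw_smul_of (inv_ne_zero D.gcdDen_ne_zero), inv_inv]

theorem Uprime_one_one_ne_zero : D.Uprime 1 1 ≠ 0 := by
  simp [Uprime_eq_smul, D.gcdDen_ne_zero]

theorem Uprime_zero_zero : D.Uprime 0 0 = D.Uprime 1 1 := by
  simp [Uprime_eq_smul]

/-- The two Bézout relations `m₂ s₁ - n₂ r₁ = 1` and `m₁ s₂ - n₁ r₂ = 1` make
`gcd(m₁, m₂)` divide `1 - n₁ r₁ n₂ r₂`. -/
theorem exists_int_sw_Uprime_zero_zero : ∃ z : ℤ, sw D.Uprime 0 0 = z := by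
  have h₁ := D.rs_det false 0 (Nat.zero_le _)
  have h₂ := D.rs_det true 0 (Nat.zero_le _)
  simp only [Bool.not_false, Bool.not_true, D.m_zero_eq false true true,
    D.n_zero_eq false true true, D.m_zero_eq true false false, D.n_zero_eq true false false]
    at h₁ h₂
  obtain ⟨z, hz⟩ := Int.gcd_dvd_one_sub_mul_of_bezout h₁ h₂
  rw [Int.gcd_natCast_natCast] at hz
  refine ⟨z, ?_⟩
  rw [D.sw_Uprime]
  simp only [Matrix.of_apply, Matrix.cons_val', Matrix.cons_val_zero, Matrix.empty_val',
    Matrix.cons_val_fin_one]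
  rw [inv_mul_eq_iff_eq_mul₀ D.gcdDen_ne_zero, gcdDen]
  exact_mod_cast hz

end QOData

theorem Mprime_properties_general (D : QOData)
    (U' : Matrix (Fin 2) (Fin 2) ℚ)
    (hU' : U' = !![(D.b false 0 : ℚ) / (D.m false false 0 : ℚ),
                     (D.b false 0 : ℚ) * (D.r false 0 : ℚ) * D.lam0 false 1;
                   (D.b true 0 : ℚ) * (D.r true 0 : ℚ) * D.lam0 true 1,
                     (D.b true 0 : ℚ) / (D.m true true 0 : ℚ)]) :
    sw U' 0 1 = (D.n false false 0 : ℚ) * (D.r false 0 : ℚ) ∧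
    sw U' 1 0 = -((D.n true true 0 : ℚ) * (D.r true 0 : ℚ)) ∧
    sw U' 1 1 = (D.m false false 0 : ℚ) * (D.m true true 0 : ℚ) / (D.dd false 0 : ℚ) ∧
    (∀ a b : Fin 2, ∃ z : ℤ, sw U' a b = (z : ℚ)) ∧
    (sw U').det = 1 ∧
    ∀ j, 1 ≤ j → j ≤ D.e - 1 →
      D.lam false false 1 j =
        sw U' 0 0 * D.lam true false 1 j + sw U' 0 1 * D.lam true true 1 j ∧
      D.lam false true 1 j =
        sw U' 1 0 * D.lam true false 1 j + sw U' 1 1 * D.lam true true 1 j := by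
  obtain rfl : U' = D.Uprime := hU'
  have hM := D.sw_Uprime
  refine ⟨by simp [hM], by simp [hM], by simp [hM, D.gcdDen_eq_div_dd], ?_, ?_, ?_⟩
  · intro a b
    fin_cases a <;> fin_cases b
    · exact D.exists_int_sw_Uprime_zero_zero
    · exact ⟨D.n false false 0 * D.r false 0, by simp [hM]⟩
    · exact ⟨-(D.n true true 0 * D.r true 0), by simp [hM]⟩
    · exact ⟨D.gcdDen, by simp [hM]⟩
  · rw [sw_det D.Uprime_one_one_ne_zero, D.Uprime_zero_zero, div_self D.Uprime_one_one_ne_zero]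
  · intro j hj hje
    obtain ⟨h₀, h₁⟩ := D.lam_one_eq_Uprime_mul hj hje
    exact sw_pivot D.Uprime_one_one_ne_zero h₀ h₁

/-- Properties of `M' = sw(U')` for
`U' = [[b₁/m₁, b₁·r₁·λ_{1,1}], [b₂·r₂·λ_{2,1}, b₂/m₂]]`: the explicit values of
`M'₁₂ = n₁·r₁`, `M'₂₁ = −n₂·r₂`, `M'₂₂ = m₁·m₂/d_•`, integrality of all four entries,
`det M' = 1`, and the relations `λ'_{1,j}(1) = M'₁₁·λ'_{1,j}(2) + M'₁₂·λ'_{2,j}(2)`,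
`λ'_{2,j}(1) = M'₂₁·λ'_{1,j}(2) + M'₂₂·λ'_{2,j}(2)` for `j = 1,…,e−1`. -/
theorem Mprime_properties (D : QOData) (he2 : 2 ≤ D.e)
    (U' : Matrix (Fin 2) (Fin 2) ℚ)
    (hU' : U' = !![(D.b false 0 : ℚ) / (D.m false false 0 : ℚ),
                     (D.b false 0 : ℚ) * (D.r false 0 : ℚ) * D.lam0 false 1;
                   (D.b true 0 : ℚ) * (D.r true 0 : ℚ) * D.lam0 true 1,
                     (D.b true 0 : ℚ) / (D.m true true 0 : ℚ)]) :
    sw U' 0 1 = (D.n false false 0 : ℚ) * (D.r false 0 : ℚ) ∧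
    sw U' 1 0 = -((D.n true true 0 : ℚ) * (D.r true 0 : ℚ)) ∧
    sw U' 1 1 = (D.m false false 0 : ℚ) * (D.m true true 0 : ℚ) / (D.dd false 0 : ℚ) ∧
    (∀ a b : Fin 2, ∃ z : ℤ, sw U' a b = (z : ℚ)) ∧
    (sw U').det = 1 ∧
    ∀ j, 1 ≤ j → j ≤ D.e - 1 →
      D.lam false false 1 j =
        sw U' 0 0 * D.lam true false 1 j + sw U' 0 1 * D.lam true true 1 j ∧
      D.lam false true 1 j =
        sw U' 1 0 * D.lam true false 1 j + sw U' 1 1 * D.lam true true 1 j :=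
  Mprime_properties_general D U' hU'
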